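/- Let F : ℝ → ℝ be a nonnegative function with F(x) = 0 for |x| ≥ 1 and Σ_{n∈ℤ} F(x+n) = 1 for every real x. Let Δ > 0 and let X_1,…,X_d, Y_1,…,Y_d be Hermitian k×k complex matrices with ‖X_i‖ ≤ 1 and ‖Y_i‖ ≤ 1 for all i. For tuples of integers m = (m_1,…,m_d), n = (n_1,…,n_d) with |m_i| ≤ ⌈1/Δ⌉ and |n_i| ≤ ⌈1/Δ⌉, define A_{m,n} = F(X_1/Δ + m_1)^{1/2} ⋯ F(X_d/Δ + m_d)^{1/2} · F(Y_1/Δ + n_1)^{1/2} ⋯ F(Y_d/Δ + n_d)^{1/2} (ordered product, using the Hermitian functional calculus) and E_{m,n} = A_{m,n} A_{m,n}†. Then each E_{m,n} is positive semidefinite and Σ_{m,n} E_{m,n} = I, i.e. the family {E_{m,n}} is a POVM. -/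

import Mathlib

open scoped Matrix ComplexOrder

/-- The `ℓ²` operator norm of a complex matrix. -/
noncomputable def opNorm {k : ℕ} (A : Matrix (Fin k) (Fin k) ℂ) : ℝ :=
  ‖Matrix.toEuclideanCLM (𝕜 := ℂ) A‖

/-- Functional calculus for a Hermitian matrix: apply `g : ℝ → ℝ` to each eigenvalue in a
spectral decomposition. -/
noncomputable def hermApply {k : ℕ} (g : ℝ → ℝ) (X : Matrix (Fin k) (Fin k) ℂ)
    (hX : X.IsHermitian) : Matrix (Fin k) (Fin k) ℂ :=
  (hX.eigenvectorUnitary : Matrix (Fin k) (Fin k) ℂ) *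
    Matrix.diagonal (fun i => (g (hX.eigenvalues i) : ℂ)) *
    star (hX.eigenvectorUnitary : Matrix (Fin k) (Fin k) ℂ)

/-- The (ordered) product
`A_{m,n} = F(X_1/Δ + m_1)^{1/2} ⋯ F(X_d/Δ + m_d)^{1/2} F(Y_1/Δ + n_1)^{1/2} ⋯ F(Y_d/Δ + n_d)^{1/2}`. -/
noncomputable def povmA {k d : ℕ} (F : ℝ → ℝ) (Δ : ℝ)
    (X Y : Fin d → Matrix (Fin k) (Fin k) ℂ)
    (hX : ∀ i, (X i).IsHermitian) (hY : ∀ i, (Y i).IsHermitian)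
    (m n : Fin d → ℤ) : Matrix (Fin k) (Fin k) ℂ :=
  (List.ofFn fun j => hermApply (fun x => Real.sqrt (F (x / Δ + m j))) (X j) (hX j)).prod *
    (List.ofFn fun j => hermApply (fun x => Real.sqrt (F (x / Δ + n j))) (Y j) (hY j)).prod

/-!
Every factor `G_a = F(Z/Δ + a)^{1/2}` is a function of the Hermitian matrix `Z`, hence
self-adjoint with `G_a G_a* = F(Z/Δ + a)`. The spectrum of `Z` lies in `[-1, 1]`, where only the
shifts `|a| ≤ ⌈1/Δ⌉` of `F(·/Δ)` are nonzero, so `Σ_a G_a G_a* = 1`. This identity survives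
ordered products of families, `Σ_{a,b} (G_a H_b)(G_a H_b)* = Σ_a G_a (Σ_b H_b H_b*) G_a* = 1`,
which gives `Σ E_{m,n} = 1`; each `E_{m,n} = A A*` is positive semidefinite.
-/

theorem Finset.sum_piFinset_succ {M : Type*} [AddCommMonoid M] {n : ℕ} {α : Fin (n + 1) → Type*}
    (S : ∀ i, Finset (α i)) (f : (∀ i, α i) → M) :
    ∑ r ∈ Fintype.piFinset S, f r =
      ∑ a ∈ S 0, ∑ t ∈ Fintype.piFinset (Fin.tail S), f (Fin.cons a t) := by
  have hS := filter_piFinset_eq_map_consEquiv S (fun _ => True)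
  simp only [filter_true] at hS
  rw [hS, sum_map, sum_product]
  rfl

theorem hermApply_eq_cfc {k : ℕ} (g : ℝ → ℝ) (X : Matrix (Fin k) (Fin k) ℂ)
    (hX : X.IsHermitian) : hermApply g X hX = cfc g X := by
  rw [hX.cfc_eq, Matrix.IsHermitian.cfc, Unitary.conjStarAlgAut_apply]
  rfl

theorem abs_le_opNorm_of_mem_spectrum {k : ℕ} {A : Matrix (Fin k) (Fin k) ℂ} {x : ℝ}
    (hx : x ∈ spectrum ℝ A) : |x| ≤ opNorm A := by
  have hxC : (x : ℂ) ∈ spectrum ℂ (Matrix.toEuclideanCLM (𝕜 := ℂ) A) := by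
    rw [AlgEquiv.spectrum_eq]
    exact spectrum.algebraMap_mem ℂ hx
  unfold opNorm
  rcases subsingleton_or_nontrivial (EuclideanSpace ℂ (Fin k)) with hE | hE
  · simp [spectrum.of_subsingleton] at hxC
  · simpa using spectrum.norm_le_norm_of_mem hxC

section StarRing

variable {R : Type*} [Semiring R] [StarRing R]

theorem Finset.sum_sum_mul_mul_star_eq_one {α β : Type*} {s : Finset α} {t : Finset β}
    {a : α → R} {b : β → R} (ha : ∑ i ∈ s, a i * star (a i) = 1)
    (hb : ∑ j ∈ t, b j * star (b j) = 1) :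
    ∑ i ∈ s, ∑ j ∈ t, a i * b j * star (a i * b j) = 1 := by
  have hab : ∀ i j, a i * b j * star (a i * b j) = a i * (b j * star (b j)) * star (a i) :=
    fun i j => by rw [star_mul]; noncomm_ring
  simp_rw [hab, ← Finset.sum_mul, ← Finset.mul_sum, hb, mul_one, ha]

theorem Finset.sum_piFinset_prod_ofFn_mul_star_eq_one {ι : Type*} :
    ∀ {d : ℕ} (S : Fin d → Finset ι) (G : Fin d → ι → R),
      (∀ j, ∑ a ∈ S j, G j a * star (G j a) = 1) →
      ∑ m ∈ Fintype.piFinset S,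
        (List.ofFn fun j => G j (m j)).prod * star (List.ofFn fun j => G j (m j)).prod = 1
  | 0, S, G, _ => by simp
  | d + 1, S, G, hG => by
    rw [Finset.sum_piFinset_succ]
    simp only [List.ofFn_succ, List.prod_cons, Fin.cons_zero, Fin.cons_succ]
    exact Finset.sum_sum_mul_mul_star_eq_one (hG 0)
      (Finset.sum_piFinset_prod_ofFn_mul_star_eq_one _ _ fun j => hG j.succ)

end StarRing

theorem Matrix.IsHermitian.sum_cfc_sqrt_mul_star_eq_one {n 𝕜 ι : Type*} [RCLike 𝕜] [Fintype n]
    [DecidableEq n] {A : Matrix n n 𝕜} (hA : A.IsHermitian) (s : Finset ι) (f : ι → ℝ → ℝ)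
    (hf0 : ∀ i x, 0 ≤ f i x) (hf : ∀ x ∈ spectrum ℝ A, ∑ i ∈ s, f i x = 1) :
    ∑ i ∈ s, cfc (fun x => √(f i x)) A * star (cfc (fun x => √(f i x)) A) = 1 := by
  -- `cfc` of a discontinuous function is junk in general, but the spectrum here is finite.
  have hcont : ∀ g : ℝ → ℝ, ContinuousOn g (spectrum ℝ A) :=
    fun g => A.finite_real_spectrum.continuousOn g
  calc ∑ i ∈ s, cfc (fun x => √(f i x)) A * star (cfc (fun x => √(f i x)) A)
      = ∑ i ∈ s, cfc (f i) A := by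
        refine Finset.sum_congr rfl fun i _ => ?_
        rw [IsSelfAdjoint.cfc.star_eq, ← cfc_mul _ _ A (hcont _) (hcont _)]
        simp_rw [Real.mul_self_sqrt (hf0 i _)]
    _ = cfc (fun x => ∑ i ∈ s, f i x) A := by
        rw [← cfc_sum f A s fun i _ => hcont _, Finset.sum_fn]
    _ = cfc (1 : ℝ → ℝ) A := cfc_congr hf
    _ = 1 := cfc_one ℝ A hA

theorem sum_Icc_neg_ceil_ceil_eq_one {F : ℝ → ℝ} (hFsupp : ∀ x : ℝ, 1 ≤ |x| → F x = 0)
    (hFsum : ∀ x : ℝ, ∑' n : ℤ, F (x + n) = 1) {R x : ℝ} (hx : |x| ≤ R) :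
    ∑ m ∈ Finset.Icc (-⌈R⌉) ⌈R⌉, F (x + m) = 1 := by
  have hout : ∀ m ∉ Finset.Icc (-⌈R⌉) ⌈R⌉, F (x + m) = 0 := by
    intro m hm
    apply hFsupp
    have hm : ⌈R⌉ + 1 ≤ |m| := by
      rw [Finset.mem_Icc, not_and_or, not_le, not_le] at hm
      cases abs_cases m <;> omega
    have hmR : R + 1 ≤ |(m : ℝ)| := by
      have : ((⌈R⌉ + 1 : ℤ) : ℝ) ≤ |(m : ℝ)| := by rw [← Int.cast_abs]; exact_mod_cast hm
      push_cast at this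
      linarith [Int.le_ceil R]
    have htri := abs_sub_abs_le_abs_sub (m : ℝ) (-x)
    rw [abs_neg, sub_neg_eq_add, add_comm] at htri
    linarith
  rw [← tsum_eq_sum (L := SummationFilter.unconditional ℤ) hout, hFsum]

theorem stmt7 {k d : ℕ} (F : ℝ → ℝ)
    (hF0 : ∀ x, 0 ≤ F x) (hFsupp : ∀ x : ℝ, 1 ≤ |x| → F x = 0)
    (hFsum : ∀ x : ℝ, ∑' n : ℤ, F (x + n) = 1)
    (Δ : ℝ) (hΔ : 0 < Δ)
    (X Y : Fin d → Matrix (Fin k) (Fin k) ℂ)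
    (hX : ∀ i, (X i).IsHermitian) (hY : ∀ i, (Y i).IsHermitian)
    (hXnorm : ∀ i, opNorm (X i) ≤ 1) (hYnorm : ∀ i, opNorm (Y i) ≤ 1) :
    (∀ m n : Fin d → ℤ,
      (m ∈ Fintype.piFinset fun _ : Fin d => Finset.Icc (-(⌈1 / Δ⌉ : ℤ)) ⌈1 / Δ⌉) →
      (n ∈ Fintype.piFinset fun _ : Fin d => Finset.Icc (-(⌈1 / Δ⌉ : ℤ)) ⌈1 / Δ⌉) →
      (povmA F Δ X Y hX hY m n * (povmA F Δ X Y hX hY m n)ᴴ).PosSemidef) ∧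
    ∑ m ∈ Fintype.piFinset (fun _ : Fin d => Finset.Icc (-(⌈1 / Δ⌉ : ℤ)) ⌈1 / Δ⌉),
      ∑ n ∈ Fintype.piFinset (fun _ : Fin d => Finset.Icc (-(⌈1 / Δ⌉ : ℤ)) ⌈1 / Δ⌉),
        povmA F Δ X Y hX hY m n * (povmA F Δ X Y hX hY m n)ᴴ = 1 := by
  refine ⟨fun m n _ _ => Matrix.posSemidef_self_mul_conjTranspose _, ?_⟩
  have hsqrt : ∀ (Z : Matrix (Fin k) (Fin k) ℂ) (hZ : Z.IsHermitian), opNorm Z ≤ 1 →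
      ∑ a ∈ Finset.Icc (-(⌈1 / Δ⌉ : ℤ)) ⌈1 / Δ⌉,
        cfc (fun x => √(F (x / Δ + a))) Z * star (cfc (fun x => √(F (x / Δ + a))) Z) = 1 := by
    refine fun Z hZ hZnorm => hZ.sum_cfc_sqrt_mul_star_eq_one _ _ (fun _ _ => hF0 _) ?_
    intro x hx
    refine sum_Icc_neg_ceil_ceil_eq_one hFsupp hFsum ?_
    rw [abs_div, abs_of_pos hΔ]
    gcongr
    exact (abs_le_opNorm_of_mem_spectrum hx).trans hZnorm
  simp_rw [povmA, hermApply_eq_cfc, ← Matrix.star_eq_conjTranspose]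
  exact Finset.sum_sum_mul_mul_star_eq_one
    (Finset.sum_piFinset_prod_ofFn_mul_star_eq_one _
      (fun j (a : ℤ) => cfc (fun x => √(F (x / Δ + a))) (X j)) fun j => hsqrt _ (hX j) (hXnorm j))
    (Finset.sum_piFinset_prod_ofFn_mul_star_eq_one _
      (fun j (a : ℤ) => cfc (fun x => √(F (x / Δ + a))) (Y j)) fun j => hsqrt _ (hY j) (hYnorm j))
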